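/- arXiv:2511.01335 — 2 statements merged into one kernel-verified Lean document; each statement's English description precedes it below -/
import Mathlib

section
/- There exists a constant C > 0 such that for all real s ≥ 0 and all β > 0: β (s ln s − s² ln s) ≤ −(β/2) s² ln(2+s) + C β, where by convention s ln s = 0 at s = 0. -/
/-!
Since `log (2 + s) - log s = log (1 + 2 / s) ≤ 2 / s` and `s log s ≤ s² - s`, the left-hand side
minus the dissipation term is at most `½ s² (2 - log s)`, and `s² (a - log s) ≤ exp (2a) / 2`
follows from `log x ≤ x - 1` at `x = exp (2a) / s²`.
-/

open Real

lemma mul_log_le_sq_sub_self {s : ℝ} (hs : 0 ≤ s) : s * log s ≤ s ^ 2 - s := by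
  rcases hs.eq_or_lt with rfl | hs
  · simp
  · nlinarith [mul_le_mul_of_nonneg_left (log_le_sub_one_of_pos hs) hs.le]

lemma log_add_sub_log_le {s a : ℝ} (hs : 0 < s) (hsa : 0 < s + a) :
    log (s + a) - log s ≤ a / s := by
  rw [← log_div hsa.ne' hs.ne']
  calc log ((s + a) / s) ≤ (s + a) / s - 1 := log_le_sub_one_of_pos (by positivity)
    _ = a / s := by field_simp; ring

lemma sq_mul_sub_log_le (a s : ℝ) : s ^ 2 * (a - log s) ≤ exp (2 * a) / 2 := by
  rcases eq_or_ne s 0 with rfl | hs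
  · simpa using (by positivity : 0 ≤ exp (2 * a) / 2)
  have hs2 : 0 < s ^ 2 := by positivity
  have hlog : 2 * a - 2 * log s ≤ exp (2 * a) / s ^ 2 - 1 := by
    have := log_le_sub_one_of_pos (div_pos (exp_pos (2 * a)) hs2)
    rwa [log_div (exp_pos _).ne' hs2.ne', log_exp, log_pow, Nat.cast_ofNat] at this
  have := (le_div_iff₀ hs2).1 (by linarith : 2 * a - 2 * log s + 1 ≤ exp (2 * a) / s ^ 2)
  linear_combination (this + hs2.le) / 2

lemma mul_log_sub_sq_mul_log_add_le (s : ℝ) (hs : 0 ≤ s) :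
    s * log s - s ^ 2 * log s + (1 / 2) * s ^ 2 * log (2 + s) ≤ exp 4 / 4 := by
  rcases hs.eq_or_lt with rfl | hs
  · simpa using (by positivity : 0 ≤ exp 4 / 4)
  have hlog : log (2 + s) - log s ≤ 2 / s := by
    simpa [add_comm] using log_add_sub_log_le (a := 2) hs (by linarith)
  calc s * log s - s ^ 2 * log s + (1 / 2) * s ^ 2 * log (2 + s)
        = s * log s - (1 / 2) * s ^ 2 * log s + (1 / 2) * s ^ 2 * (log (2 + s) - log s) := by
          ring
    _ ≤ (s ^ 2 - s) - (1 / 2) * s ^ 2 * log s + (1 / 2) * s ^ 2 * (2 / s) := by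
          gcongr
          exact mul_log_le_sq_sub_self hs.le
    _ = (1 / 2) * (s ^ 2 * (2 - log s)) := by field_simp; ring
    _ ≤ (1 / 2) * (exp (2 * 2) / 2) := by gcongr; exact sq_mul_sub_log_le 2 s
    _ = exp 4 / 4 := by rw [show (2 : ℝ) * 2 = 4 by norm_num]; ring

theorem logistic_entropy_production_bound :
    ∃ C : ℝ, 0 < C ∧ ∀ s : ℝ, 0 ≤ s → ∀ β : ℝ, 0 < β →
      β * (s * Real.log s - s ^ 2 * Real.log s)
        ≤ -(β / 2) * s ^ 2 * Real.log (2 + s) + C * β := by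
  refine ⟨exp 4 / 4, by positivity, fun s hs β hβ => ?_⟩
  linear_combination β * mul_log_sub_sq_mul_log_add_le s hs
end

section
/- Let y : [0,∞) → [0,∞) be absolutely continuous, ϱ > 0, and h ∈ L¹_loc([0,∞)) nonnegative with the property that ∫_t^{t+1} h(s) ds ≤ H for all t ≥ 0. If y'(t) + ϱ y(t) ≤ h(t) for a.e. t ≥ 0, then y(t) ≤ y(0) e^{-ϱ t} + H · (1 + 1/(1 − e^{-ϱ})) for all t ≥ 0; in particular y is bounded on [0,∞). -/
/-!
Multiplying by the integrating factor `e^{ϱt}` gives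
`y t ≤ y 0 e^{-ϱt} + F t` with `F t = e^{-ϱt} ∫₀ᵗ h(s) e^{ϱs} ds`.
Splitting off the last unit interval, `F t ≤ e^{-ϱ} F (t - 1) + H` for `t ≥ 1`, while
`F t ≤ H` on `[0, 1]`; iterating, `F` never exceeds the fixed point `H / (1 - e^{-ϱ})` of this
recursion.
-/

open MeasureTheory Real Set

theorem sub_le_integral_of_hasDerivAt_of_ae_le {f f' g : ℝ → ℝ} {a b : ℝ} (hab : a ≤ b)
    (hcont : ContinuousOn f (Icc a b)) (hderiv : ∀ x ∈ Ioo a b, HasDerivAt f (f' x) x)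
    (hg : IntervalIntegrable g volume a b)
    (hle : ∀ᵐ x ∂volume.restrict (Icc a b), f' x ≤ g x) :
    f b - f a ≤ ∫ x in a..b, g x := by
  -- `max g f'` dominates `f'` everywhere and agrees with `g` almost everywhere on `[a, b]`.
  have hmax : (fun x ↦ max (g x) (f' x)) =ᵐ[volume.restrict (Icc a b)] g := by
    filter_upwards [hle] with x hx using max_eq_left hx
  have hint : IntegrableOn (fun x ↦ max (g x) (f' x)) (Icc a b) :=
    ((intervalIntegrable_iff_integrableOn_Icc_of_le hab).mp hg).congr_fun_ae hmax.symm
  calc f b - f a ≤ ∫ x in a..b, max (g x) (f' x) :=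
        intervalIntegral.sub_le_integral_of_hasDeriv_right_of_le hab hcont
          (fun x hx ↦ (hderiv x hx).hasDerivWithinAt) hint (fun x _ ↦ le_max_right _ _)
    _ = ∫ x in a..b, g x := by
        refine intervalIntegral.integral_congr_ae ?_
        filter_upwards [(ae_restrict_iff' measurableSet_Icc).mp hmax] with x hx hmem
        rw [uIoc_of_le hab] at hmem
        exact hx (Ioc_subset_Icc_self hmem)

theorem exp_mul_sub_le_integral_of_deriv_add_mul_le {y y' h : ℝ → ℝ} {ϱ a b : ℝ}
    (hab : a ≤ b) (hderiv : ∀ t ∈ Icc a b, HasDerivAt y (y' t) t)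
    (hh : IntervalIntegrable h volume a b)
    (hineq : ∀ᵐ t ∂volume.restrict (Icc a b), y' t + ϱ * y t ≤ h t) :
    y b * exp (ϱ * b) - y a * exp (ϱ * a) ≤ ∫ s in a..b, h s * exp (ϱ * s) := by
  have hz : ∀ t ∈ Icc a b,
      HasDerivAt (fun s ↦ y s * exp (ϱ * s)) ((y' t + ϱ * y t) * exp (ϱ * t)) t := by
    intro t ht
    have hexp : HasDerivAt (fun s ↦ exp (ϱ * s)) (exp (ϱ * t) * ϱ) t := by
      simpa using ((hasDerivAt_id t).const_mul ϱ).exp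
    exact ((hderiv t ht).mul hexp).congr_deriv (by ring)
  refine sub_le_integral_of_hasDerivAt_of_ae_le hab
    (fun t ht ↦ (hz t ht).continuousAt.continuousWithinAt)
    (fun t ht ↦ hz t (Ioo_subset_Icc_self ht))
    (hh.mul_continuousOn (by fun_prop)) ?_
  filter_upwards [hineq] with t ht
  exact mul_le_mul_of_nonneg_right ht (exp_pos _).le

theorem exp_neg_mul_integral_mul_exp_le_integral {h : ℝ → ℝ} {ϱ a b : ℝ} (hϱ : 0 ≤ ϱ)
    (hab : a ≤ b) (hh : ∀ s ∈ Icc a b, 0 ≤ h s) (hint : IntervalIntegrable h volume a b) :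
    exp (-(ϱ * b)) * ∫ s in a..b, h s * exp (ϱ * s) ≤ ∫ s in a..b, h s := by
  rw [← intervalIntegral.integral_const_mul]
  refine intervalIntegral.integral_mono_on hab
    ((hint.mul_continuousOn (by fun_prop)).const_mul _) hint fun s hs ↦ ?_
  calc exp (-(ϱ * b)) * (h s * exp (ϱ * s)) = h s * exp (ϱ * (s - b)) := by
        rw [mul_sub, sub_eq_add_neg, exp_add]; ring
    _ ≤ h s := mul_le_of_le_one_right (hh s hs)
        (exp_le_one_iff.mpr (mul_nonpos_of_nonneg_of_nonpos hϱ (by linarith [hs.2])))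

theorem le_div_one_sub_of_le_mul_sub_one_add {F : ℝ → ℝ} {q H : ℝ} (hq0 : 0 ≤ q)
    (hq1 : q < 1) (hH : 0 ≤ H) (hbase : ∀ t ∈ Icc (0 : ℝ) 1, F t ≤ H)
    (hstep : ∀ t, 1 ≤ t → F t ≤ q * F (t - 1) + H) {t : ℝ} (ht : 0 ≤ t) :
    F t ≤ H / (1 - q) := by
  have hden : 0 < 1 - q := sub_pos.mpr hq1
  have hH_le : H ≤ H / (1 - q) := le_div_self hH hden (by linarith)
  suffices ∀ n : ℕ, ∀ t ∈ Icc (0 : ℝ) n, F t ≤ H / (1 - q) by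
    obtain ⟨n, hn⟩ := exists_nat_ge t
    exact this n t ⟨ht, hn⟩
  intro n
  induction n with
  | zero =>
    intro t ht
    exact (hbase t ⟨ht.1, by linarith [ht.2, (Nat.cast_zero : ((0:ℕ):ℝ) = 0)]⟩).trans hH_le
  | succ n ih =>
    intro t ⟨ht0, htn⟩
    rcases le_or_gt t 1 with ht1 | ht1
    · exact (hbase t ⟨ht0, ht1⟩).trans hH_le
    · calc F t ≤ q * F (t - 1) + H := hstep t ht1.le
        _ ≤ q * (H / (1 - q)) + H := by
          gcongr
          exact ih (t - 1) ⟨by linarith, by push_cast at htn; linarith⟩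
        _ = H / (1 - q) := by field_simp; ring

theorem exp_neg_mul_integral_mul_exp_le {h : ℝ → ℝ} {ϱ H : ℝ} (hϱ : 0 < ϱ) (hH : 0 ≤ H)
    (hh : ∀ t, 0 ≤ t → 0 ≤ h t)
    (hint : ∀ a b, 0 ≤ a → IntervalIntegrable h volume a b)
    (hbound : ∀ t, 0 ≤ t → ∫ s in t..(t + 1), h s ≤ H) {t : ℝ} (ht : 0 ≤ t) :
    exp (-(ϱ * t)) * ∫ s in (0 : ℝ)..t, h s * exp (ϱ * s) ≤ H / (1 - exp (-ϱ)) := by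
  have hweighted (a b : ℝ) (ha : 0 ≤ a) (hab : a ≤ b) :=
    exp_neg_mul_integral_mul_exp_le_integral hϱ.le hab (fun s hs ↦ hh s (ha.trans hs.1))
      (hint a b ha)
  refine le_div_one_sub_of_le_mul_sub_one_add
    (F := fun t ↦ exp (-(ϱ * t)) * ∫ s in (0 : ℝ)..t, h s * exp (ϱ * s)) (exp_pos _).le
    (exp_lt_one_iff.mpr (neg_lt_zero.mpr hϱ)) hH ?_ ?_ ht
  · intro t ⟨ht0, ht1⟩
    calc _ ≤ ∫ s in (0 : ℝ)..t, h s := hweighted 0 t le_rfl ht0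
      _ ≤ ∫ s in (0 : ℝ)..1, h s := by
        refine intervalIntegral.integral_mono_interval le_rfl ht0 ht1 ?_ (hint 0 1 le_rfl)
        filter_upwards [ae_restrict_mem measurableSet_Ioc] with s hs using hh s hs.1.le
      _ ≤ H := by simpa using hbound 0 le_rfl
  · intro t ht1
    have hsplit := intervalIntegral.integral_add_adjacent_intervals
      ((hint 0 (t - 1) le_rfl).mul_continuousOn (g := fun s ↦ exp (ϱ * s)) (by fun_prop))
      ((hint (t - 1) t (by linarith)).mul_continuousOn (g := fun s ↦ exp (ϱ * s)) (by fun_prop))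
    have hlast : exp (-(ϱ * t)) * ∫ s in (t - 1)..t, h s * exp (ϱ * s) ≤ H :=
      (hweighted (t - 1) t (by linarith) (by linarith)).trans
        (by simpa using hbound (t - 1) (by linarith))
    have hshift : exp (-(ϱ * t)) = exp (-ϱ) * exp (-(ϱ * (t - 1))) := by
      rw [← exp_add]; ring_nf
    rw [hshift] at hlast
    rw [← hsplit, mul_add, hshift, mul_assoc]
    linarith

theorem uniform_gronwall_bound_general
    (ϱ H : ℝ) (hϱ : 0 < ϱ) (hH : 0 ≤ H)
    (y y' h : ℝ → ℝ)
    (hderiv : ∀ t : ℝ, 0 ≤ t → HasDerivAt y (y' t) t)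
    (hh : ∀ t : ℝ, 0 ≤ t → 0 ≤ h t)
    (hhint : ∀ a b : ℝ, 0 ≤ a → IntervalIntegrable h MeasureTheory.volume a b)
    (hhbound : ∀ t : ℝ, 0 ≤ t → ∫ s in t..(t + 1), h s ≤ H)
    (hineq : ∀ᵐ t ∂(MeasureTheory.volume.restrict (Set.Ici (0 : ℝ))),
      y' t + ϱ * y t ≤ h t) :
    ∀ t : ℝ, 0 ≤ t →
      y t ≤ y 0 * Real.exp (-ϱ * t) + H * (1 + 1 / (1 - Real.exp (-ϱ))) := by
  intro t ht
  have hcomparison := exp_mul_sub_le_integral_of_deriv_add_mul_le ht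
    (fun s hs ↦ hderiv s hs.1) (hhint 0 t le_rfl)
    (ae_restrict_of_ae_restrict_of_subset Icc_subset_Ici_self hineq)
  have hforcing := exp_neg_mul_integral_mul_exp_le hϱ hH hh hhint hhbound ht
  calc y t = exp (-(ϱ * t)) * (y t * exp (ϱ * t)) := by
        rw [mul_left_comm, ← exp_add, neg_add_cancel, exp_zero, mul_one]
    _ ≤ exp (-(ϱ * t)) * (y 0 + ∫ s in (0 : ℝ)..t, h s * exp (ϱ * s)) := by
        gcongr
        simp only [mul_zero, exp_zero, mul_one] at hcomparison
        linarith
    _ ≤ y 0 * exp (-ϱ * t) + H / (1 - exp (-ϱ)) := by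
        rw [mul_add, neg_mul, mul_comm]
        gcongr
    _ ≤ y 0 * exp (-ϱ * t) + H * (1 + 1 / (1 - exp (-ϱ))) := by
        rw [mul_add, mul_one_div]
        linarith

theorem uniform_gronwall_bound
    (ϱ H : ℝ) (hϱ : 0 < ϱ) (hH : 0 ≤ H)
    (y y' h : ℝ → ℝ)
    (hy : ∀ t : ℝ, 0 ≤ t → 0 ≤ y t)
    (hderiv : ∀ t : ℝ, 0 ≤ t → HasDerivAt y (y' t) t)
    (hh : ∀ t : ℝ, 0 ≤ t → 0 ≤ h t)
    (hhint : ∀ a b : ℝ, 0 ≤ a → IntervalIntegrable h MeasureTheory.volume a b)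
    (hhbound : ∀ t : ℝ, 0 ≤ t → ∫ s in t..(t + 1), h s ≤ H)
    (hineq : ∀ᵐ t ∂(MeasureTheory.volume.restrict (Set.Ici (0 : ℝ))),
      y' t + ϱ * y t ≤ h t) :
    ∀ t : ℝ, 0 ≤ t →
      y t ≤ y 0 * Real.exp (-ϱ * t) + H * (1 + 1 / (1 - Real.exp (-ϱ))) :=
  uniform_gronwall_bound_general ϱ H hϱ hH y y' h hderiv hh hhint hhbound hineq
end
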